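/- Let T be the d-regular rooted tree, D ≥ 1, and P ≤ Aut(T^D) a minimal pattern subgroup with group of finite type G = G_P. Then St_G(n + D − 1) ≤ RiSt_G(n) for all n ≥ 1. In particular, if G is infinite then RiSt_G(n) ≠ 1 for all n ≥ 1, i.e. G is weakly branch. -/

import Mathlib

/-!
Let `g ∈ G_P` fix every vertex up to level `n + D - 1`. For each vertex `v` of level `n`, the
rigid restriction of `g` to the subtree `T_v` again lies in `G_P`: its sections at vertices
below `v` are those of `g`, and its sections at strict prefixes `u` of `v` act trivially on the
first `D` levels, since the vertices they see lie at level at most `n + D - 1`. The product of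
these restrictions over level `n` is `g`. If `G_P` is infinite, `St_G(n + D - 1)` is
nontrivial, because an element of `G_P` is determined modulo it by its action on the finitely
many vertices up to level `n + D - 1`; hence `RiSt_G(n) ≠ 1`.
-/

namespace TreeFT

/-- Vertices of the `d`-regular rooted tree: finite words over `Fin d`. -/
abbrev Vertex (d : ℕ) := List (Fin d)

/-- The automorphism group of the `d`-regular rooted tree, realized as the subgroup of
permutations of the vertex set that preserve length (levels) and prefixes (adjacency). -/
def treeAut (d : ℕ) : Subgroup (Equiv.Perm (Vertex d)) where
  carrier := {g | (∀ v : Vertex d, (g v).length = v.length) ∧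
      (∀ v w : Vertex d, (g (v ++ w)).take v.length = g v)}
  one_mem' := ⟨fun _ => rfl, fun v w => List.take_left⟩
  mul_mem' := by
    rintro g h ⟨hg1, hg2⟩ ⟨hh1, hh2⟩
    refine ⟨fun v => by rw [Equiv.Perm.mul_apply, hg1, hh1], fun v w => ?_⟩
    have h1 : h (v ++ w) = h v ++ (h (v ++ w)).drop v.length := by
      conv_lhs => rw [← List.take_append_drop v.length (h (v ++ w))]
      rw [hh2]
    rw [Equiv.Perm.mul_apply, Equiv.Perm.mul_apply, h1]
    have h2 : v.length = (h v).length := (hh1 v).symm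
    rw [h2]
    exact hg2 _ _
  inv_mem' := by
    rintro g ⟨hg1, hg2⟩
    constructor
    · intro v
      have h := hg1 (g⁻¹ v)
      rw [← Equiv.Perm.mul_apply, mul_inv_cancel, Equiv.Perm.one_apply] at h
      exact h.symm
    · intro v w
      apply g.injective
      have hlen : v.length ≤ (g⁻¹ (v ++ w)).length := by
        have h := hg1 (g⁻¹ (v ++ w))
        rw [← Equiv.Perm.mul_apply, mul_inv_cancel, Equiv.Perm.one_apply] at h
        rw [← h, List.length_append]
        exact Nat.le_add_right _ _
      have h3 := hg2 ((g⁻¹ (v ++ w)).take v.length) ((g⁻¹ (v ++ w)).drop v.length)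
      rw [List.take_append_drop, ← Equiv.Perm.mul_apply, mul_inv_cancel, Equiv.Perm.one_apply, List.length_take,
        min_eq_left hlen, List.take_left] at h3
      rw [← h3, ← Equiv.Perm.mul_apply, mul_inv_cancel, Equiv.Perm.one_apply]

variable {d : ℕ}

/-- `Aut(T)` as a type. -/
abbrev TAut (d : ℕ) := ↥(treeAut d)

lemma length_apply (g : TAut d) (v : Vertex d) :
    ((g : Equiv.Perm (Vertex d)) v).length = v.length := g.2.1 v

lemma take_apply (g : TAut d) (v w : Vertex d) :
    ((g : Equiv.Perm (Vertex d)) (v ++ w)).take v.length = (g : Equiv.Perm (Vertex d)) v :=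
  g.2.2 v w

lemma apply_append (g : TAut d) (v w : Vertex d) :
    (g : Equiv.Perm (Vertex d)) (v ++ w) =
      (g : Equiv.Perm (Vertex d)) v ++ ((g : Equiv.Perm (Vertex d)) (v ++ w)).drop v.length := by
  conv_lhs => rw [← List.take_append_drop v.length ((g : Equiv.Perm (Vertex d)) (v ++ w))]
  rw [take_apply]

/-- The section `g|_v` of a tree automorphism at the vertex `v`. -/
def sect (g : TAut d) (v : Vertex d) : TAut d :=
  ⟨{ toFun := fun w => ((g : Equiv.Perm (Vertex d)) (v ++ w)).drop v.length
     invFun := fun w =>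
       (((g : Equiv.Perm (Vertex d)))⁻¹ ((g : Equiv.Perm (Vertex d)) v ++ w)).drop v.length
     left_inv := by
       intro w
       show ((g : Equiv.Perm (Vertex d))⁻¹
         ((g : Equiv.Perm (Vertex d)) v ++
           ((g : Equiv.Perm (Vertex d)) (v ++ w)).drop v.length)).drop v.length = w
       rw [← apply_append g v w, ← Equiv.Perm.mul_apply, inv_mul_cancel, Equiv.Perm.one_apply, List.drop_left]
     right_inv := by
       intro w
       show ((g : Equiv.Perm (Vertex d))
         (v ++ ((g : Equiv.Perm (Vertex d))⁻¹
           ((g : Equiv.Perm (Vertex d)) v ++ w)).drop v.length)).drop v.length = w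
       have h2 := apply_append g⁻¹ ((g : Equiv.Perm (Vertex d)) v) w
       simp only [InvMemClass.coe_inv] at h2
       rw [← Equiv.Perm.mul_apply, inv_mul_cancel, Equiv.Perm.one_apply, length_apply] at h2
       rw [← h2, ← Equiv.Perm.mul_apply, mul_inv_cancel, Equiv.Perm.one_apply, ← length_apply g v, List.drop_left] },
   by
    constructor
    · intro w
      simp only [Equiv.coe_fn_mk, List.length_drop, length_apply, List.length_append]
      omega
    · intro w u
      simp only [Equiv.coe_fn_mk]
      rw [← List.append_assoc]
      have h0 : ((g : Equiv.Perm (Vertex d)) ((v ++ w) ++ u)).take (v ++ w).length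
          = (g : Equiv.Perm (Vertex d)) (v ++ w) := take_apply g (v ++ w) u
      have h1 : w.length = (v.length + w.length) - v.length := by omega
      rw [h1, ← List.drop_take, ← List.length_append, h0]⟩

lemma sect_apply (g : TAut d) (v w : Vertex d) :
    ((sect g v : TAut d) : Equiv.Perm (Vertex d)) w
      = ((g : Equiv.Perm (Vertex d)) (v ++ w)).drop v.length := rfl

lemma sect_mul (g h : TAut d) (v : Vertex d) :
    sect (g * h) v = sect g ((h : Equiv.Perm (Vertex d)) v) * sect h v := by
  apply Subtype.ext
  apply Equiv.ext
  intro w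
  simp only [MulMemClass.coe_mul, Equiv.Perm.mul_apply, sect_apply]
  rw [← apply_append h v w, length_apply]

lemma sect_one (v : Vertex d) : sect (1 : TAut d) v = 1 := by
  apply Subtype.ext
  apply Equiv.ext
  intro w
  simp only [sect_apply, OneMemClass.coe_one, Equiv.Perm.coe_one, id_eq]
  exact List.drop_left

end TreeFT
namespace TreeFT

variable {d : ℕ}

/-- The stabilizer `St(n)` of the `n`-th level: automorphisms acting trivially on the first
`n` levels of the tree. -/
def lst (d n : ℕ) : Subgroup (TAut d) where
  carrier := {g | ∀ v : Vertex d, v.length ≤ n → (g : Equiv.Perm (Vertex d)) v = v}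
  one_mem' := fun _ _ => rfl
  mul_mem' := by
    intro g h hg hh v hv
    show (g : Equiv.Perm (Vertex d)) ((h : Equiv.Perm (Vertex d)) v) = v
    rw [hh v hv, hg v hv]
  inv_mem' := by
    intro g hg v hv
    show ((g : Equiv.Perm (Vertex d)))⁻¹ v = v
    apply (g : Equiv.Perm (Vertex d)).injective
    rw [← Equiv.Perm.mul_apply, mul_inv_cancel, Equiv.Perm.one_apply, hg v hv]

lemma mem_lst {g : TAut d} {n : ℕ} :
    g ∈ lst d n ↔ ∀ v : Vertex d, v.length ≤ n → (g : Equiv.Perm (Vertex d)) v = v :=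
  Iff.rfl

instance lst_normal (d n : ℕ) : (lst d n).Normal := by
  constructor
  intro s hs g v hv
  show (g : Equiv.Perm (Vertex d))
    ((s : Equiv.Perm (Vertex d)) (((g : Equiv.Perm (Vertex d)))⁻¹ v)) = v
  have h1 : ((g⁻¹ : TAut d) : Equiv.Perm (Vertex d)) v = ((g : Equiv.Perm (Vertex d)))⁻¹ v := by
    simp
  have h2 : (((g : Equiv.Perm (Vertex d)))⁻¹ v).length ≤ n := by
    rw [← h1, length_apply]; exact hv
  rw [hs _ h2, ← Equiv.Perm.mul_apply, mul_inv_cancel, Equiv.Perm.one_apply]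

/-- `Aut(T^n)`, the automorphism group of the finite tree consisting of the first `n` levels,
realized as the quotient of `Aut(T)` by the `n`-th level stabilizer. -/
abbrev FAut (d n : ℕ) := TAut d ⧸ lst d n

/-- `π_n : Aut(T) → Aut(T^n)`, restriction to the first `n` levels. -/
def proj (d n : ℕ) : TAut d →* FAut d n := QuotientGroup.mk' (lst d n)

lemma proj_surjective (d n : ℕ) : Function.Surjective (proj d n) :=
  QuotientGroup.mk'_surjective _

/-- The group of finite type `G_P` of depth `D` with pattern group `P ≤ Aut(T^D)`:
all tree automorphisms whose section at every vertex acts on the first `D` levels as an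
element of `P`. -/
def gft (d D : ℕ) (P : Subgroup (FAut d D)) : Subgroup (TAut d) where
  carrier := {g | ∀ v : Vertex d, proj d D (sect g v) ∈ P}
  one_mem' := by
    intro v
    rw [sect_one, map_one]
    exact one_mem P
  mul_mem' := by
    intro g h hg hh v
    rw [sect_mul, map_mul]
    exact mul_mem (hg _) (hh _)
  inv_mem' := by
    intro g hg v
    have h2 : sect g (((g⁻¹ : TAut d) : Equiv.Perm (Vertex d)) v) * sect g⁻¹ v = 1 := by
      rw [← sect_mul, mul_inv_cancel, sect_one]
    have h3 : sect g⁻¹ v = (sect g (((g⁻¹ : TAut d) : Equiv.Perm (Vertex d)) v))⁻¹ :=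
      (inv_eq_of_mul_eq_one_right h2).symm
    rw [h3, map_inv]
    exact inv_mem (hg _)

lemma mem_gft {g : TAut d} {D : ℕ} {P : Subgroup (FAut d D)} :
    g ∈ gft d D P ↔ ∀ v : Vertex d, proj d D (sect g v) ∈ P := Iff.rfl

/-- `P ≤ Aut(T^D)` is a minimal pattern subgroup if `π_D(G_P) = P`. -/
def IsMinimalPattern (d D : ℕ) (P : Subgroup (FAut d D)) : Prop :=
  (gft d D P).map (proj d D) = P

/-- A subgroup of `Aut(T)` is level-transitive if it acts transitively on every level. -/
def LevelTransitive (H : Subgroup (TAut d)) : Prop :=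
  ∀ v w : Vertex d, v.length = w.length → ∃ g ∈ H, (g : Equiv.Perm (Vertex d)) v = w

/-- A subgroup of `Aut(T)` is self-similar if it contains all sections of its elements. -/
def SelfSimilar (H : Subgroup (TAut d)) : Prop :=
  ∀ g ∈ H, ∀ v : Vertex d, sect g v ∈ H

/-- A subgroup of `Aut(T)` is fractal if it is self-similar, level-transitive, and for every
vertex `v` the section map maps the stabilizer of `v` onto the whole group. -/
def Fractal (H : Subgroup (TAut d)) : Prop :=
  SelfSimilar H ∧ LevelTransitive H ∧
    ∀ v : Vertex d, ∀ h ∈ H, ∃ k ∈ H, (k : Equiv.Perm (Vertex d)) v = v ∧ sect k v = h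

/-- The geometric product `K_n` of `K` at level `n`: elements of `St(n)` all of whose sections
at level-`n` vertices lie in `K`. -/
def geom (K : Subgroup (TAut d)) (n : ℕ) : Subgroup (TAut d) where
  carrier := {g | g ∈ lst d n ∧ ∀ v : Vertex d, v.length = n → sect g v ∈ K}
  one_mem' := ⟨one_mem _, fun v _ => by rw [sect_one]; exact one_mem K⟩
  mul_mem' := by
    rintro g h ⟨hg1, hg2⟩ ⟨hh1, hh2⟩
    refine ⟨mul_mem hg1 hh1, fun v hv => ?_⟩
    rw [sect_mul, hh1 v hv.le]
    exact mul_mem (hg2 v hv) (hh2 v hv)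
  inv_mem' := by
    rintro g ⟨hg1, hg2⟩
    refine ⟨inv_mem hg1, fun v hv => ?_⟩
    have hfix : ((g⁻¹ : TAut d) : Equiv.Perm (Vertex d)) v = v :=
      (inv_mem hg1 : g⁻¹ ∈ lst d n) v hv.le
    have h2 : sect g v * sect g⁻¹ v = 1 := by
      have := sect_mul g g⁻¹ v
      rw [mul_inv_cancel, sect_one, hfix] at this
      exact this.symm
    rw [(inv_eq_of_mul_eq_one_right h2).symm]
    exact inv_mem (hg2 v hv)

end TreeFT
namespace TreeFT

variable {d : ℕ}

/-- The congruence topology on `Aut(T)`: the topology of pointwise convergence on the vertex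
set (each vertex set carrying the discrete topology); the level stabilizers `St(n)` form a
base of neighborhoods of the identity for it. -/
instance tautTopologicalSpace (d : ℕ) : TopologicalSpace (TAut d) :=
  TopologicalSpace.induced
    (fun g : TAut d => ((g : Equiv.Perm (Vertex d)) : Vertex d → Vertex d))
    (@Pi.topologicalSpace (Vertex d) (fun _ => Vertex d) (fun _ => ⊥))

lemma isOpen_eval (d : ℕ) (v u : Vertex d) :
    IsOpen {g : TAut d | (g : Equiv.Perm (Vertex d)) v = u} := by
  letI : TopologicalSpace (Vertex d) := ⊥
  haveI : DiscreteTopology (Vertex d) := ⟨rfl⟩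
  have h : IsOpen ((fun f : Vertex d → Vertex d => f v) ⁻¹' {u}) := by
    have hc : Continuous (fun f : Vertex d → Vertex d => f v) := continuous_apply v
    exact hc.isOpen_preimage _ (isOpen_discrete _)
  exact isOpen_induced h

lemma isOpen_eval_mem (d : ℕ) (v : Vertex d) (s : Set (Vertex d)) :
    IsOpen {g : TAut d | (g : Equiv.Perm (Vertex d)) v ∈ s} := by
  have h : {g : TAut d | (g : Equiv.Perm (Vertex d)) v ∈ s}
      = ⋃ u ∈ s, {g : TAut d | (g : Equiv.Perm (Vertex d)) v = u} := by
    ext g; simp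
  rw [h]
  exact isOpen_biUnion fun u _ => isOpen_eval d v u

lemma continuous_into_vertex {X : Type*} [TopologicalSpace X] (f : X → Vertex d)
    (h : ∀ u : Vertex d, IsOpen (f ⁻¹' {u})) :
    @Continuous X (Vertex d) _ ⊥ f := by
  rw [continuous_def]
  intro s _
  have hs : f ⁻¹' s = ⋃ u ∈ s, f ⁻¹' {u} := by
    ext x; simp
  rw [hs]
  exact isOpen_biUnion fun u _ => h u

instance tautContinuousMul (d : ℕ) : ContinuousMul (TAut d) := by
  constructor
  · -- continuity of multiplication
    apply continuous_induced_rng.2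
    apply @continuous_pi _ _ _ _ (fun _ => (⊥ : TopologicalSpace (Vertex d)))
    intro v
    apply continuous_into_vertex
      (f := fun p : TAut d × TAut d => ((p.1 * p.2 : TAut d) : Equiv.Perm (Vertex d)) v)
    intro u
    have h : (fun p : TAut d × TAut d =>
          ((p.1 * p.2 : TAut d) : Equiv.Perm (Vertex d)) v) ⁻¹' {u}
        = ⋃ w : Vertex d, ({g : TAut d | (g : Equiv.Perm (Vertex d)) w = u} ×ˢ
            {h : TAut d | (h : Equiv.Perm (Vertex d)) v = w}) := by
      ext p
      simp only [Set.mem_preimage, Set.mem_singleton_iff, Set.mem_iUnion, Set.mem_prod,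
        Set.mem_setOf_eq]
      constructor
      · intro hp
        exact ⟨(p.2 : Equiv.Perm (Vertex d)) v, hp, rfl⟩
      · rintro ⟨w, hw1, hw2⟩
        show (p.1 : Equiv.Perm (Vertex d)) ((p.2 : Equiv.Perm (Vertex d)) v) = u
        rw [hw2]; exact hw1
    rw [h]
    exact isOpen_iUnion fun w => (isOpen_eval d w u).prod (isOpen_eval d v w)

instance tautContinuousInv (d : ℕ) : ContinuousInv (TAut d) := by
  constructor
  · -- continuity of inversion
    apply continuous_induced_rng.2
    apply @continuous_pi _ _ _ _ (fun _ => (⊥ : TopologicalSpace (Vertex d)))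
    intro v
    apply continuous_into_vertex
      (f := fun g : TAut d => ((g⁻¹ : TAut d) : Equiv.Perm (Vertex d)) v)
    intro u
    have h : (fun g : TAut d => ((g⁻¹ : TAut d) : Equiv.Perm (Vertex d)) v) ⁻¹' {u}
        = {g : TAut d | (g : Equiv.Perm (Vertex d)) u = v} := by
      ext g
      simp only [Set.mem_preimage, Set.mem_singleton_iff, Set.mem_setOf_eq,
        InvMemClass.coe_inv]
      constructor
      · intro hg; rw [← hg, ← Equiv.Perm.mul_apply, mul_inv_cancel, Equiv.Perm.one_apply]
      · intro hg; rw [← hg, ← Equiv.Perm.mul_apply, inv_mul_cancel, Equiv.Perm.one_apply]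
    rw [h]
    exact isOpen_eval d u v

instance tautTopologicalGroup (d : ℕ) : IsTopologicalGroup (TAut d) := ⟨⟩

/-- A subgroup of `Aut(T)` (viewed as a topological group with the congruence topology) is
topologically finitely generated if it contains a finitely generated dense subgroup. -/
def TopFG (H : Subgroup (TAut d)) : Prop :=
  ∃ S : Set ↥H, S.Finite ∧ Dense ((Subgroup.closure S : Subgroup ↥H) : Set ↥H)

/-- A profinite group is just-infinite if it is infinite and every nontrivial closed normal
subgroup has finite index. -/
def JustInfinite (H : Subgroup (TAut d)) : Prop :=
  Infinite ↥H ∧ ∀ N : Subgroup ↥H, N.Normal → IsClosed (N : Set ↥H) → N ≠ ⊥ → N.index ≠ 0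

/-- A profinite group is strongly complete if every subgroup of finite index is open. -/
def StronglyComplete (H : Subgroup (TAut d)) : Prop :=
  ∀ N : Subgroup ↥H, N.index ≠ 0 → IsOpen (N : Set ↥H)

end TreeFT

namespace TreeFT

/-- The rigid vertex stabilizer `rist_G(v)`: elements of `G` fixing every vertex not lying in
the subtree rooted at `v`. -/
def rist {d : ℕ} (G : Subgroup (TAut d)) (v : Vertex d) : Subgroup (TAut d) where
  carrier := {g | g ∈ G ∧ ∀ w : Vertex d, ¬ v <+: w → (g : Equiv.Perm (Vertex d)) w = w}
  one_mem' := ⟨one_mem G, fun _ _ => rfl⟩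
  mul_mem' := by
    rintro g h ⟨hg1, hg2⟩ ⟨hh1, hh2⟩
    refine ⟨mul_mem hg1 hh1, fun w hw => ?_⟩
    show (g : Equiv.Perm (Vertex d)) ((h : Equiv.Perm (Vertex d)) w) = w
    rw [hh2 w hw, hg2 w hw]
  inv_mem' := by
    rintro g ⟨hg1, hg2⟩
    refine ⟨inv_mem hg1, fun w hw => ?_⟩
    show ((g : Equiv.Perm (Vertex d)))⁻¹ w = w
    apply (g : Equiv.Perm (Vertex d)).injective
    rw [← Equiv.Perm.mul_apply, mul_inv_cancel, Equiv.Perm.one_apply, hg2 w hw]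

/-- The `n`-th rigid level stabilizer `RiSt_G(n)`: the subgroup generated by the rigid
stabilizers of the vertices of level `n`. -/
def rigidLevelStab {d : ℕ} (G : Subgroup (TAut d)) (n : ℕ) : Subgroup (TAut d) :=
  ⨆ v ∈ {v : Vertex d | v.length = n}, rist G v

section RigidRestriction

variable {d : ℕ}

lemma apply_prefix_apply (g : TAut d) {v u : Vertex d} (h : v <+: u) :
    (g : Equiv.Perm (Vertex d)) v <+: (g : Equiv.Perm (Vertex d)) u := by
  obtain ⟨w, rfl⟩ := h
  rw [← take_apply g v w]
  exact List.take_prefix _ _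

lemma apply_eq_self_of_prefix {g : TAut d} {u v : Vertex d}
    (hv : (g : Equiv.Perm (Vertex d)) v = v) (hu : u <+: v) :
    (g : Equiv.Perm (Vertex d)) u = u := by
  have hgu : (g : Equiv.Perm (Vertex d)) u <+: v := hv ▸ apply_prefix_apply g hu
  exact (List.prefix_of_prefix_length_le hgu hu (length_apply g u).le).eq_of_length
    (length_apply g u)

lemma prefix_apply_iff {g : TAut d} {v u : Vertex d} (hv : (g : Equiv.Perm (Vertex d)) v = v) :
    v <+: (g : Equiv.Perm (Vertex d)) u ↔ v <+: u := by
  refine ⟨fun h => ?_, fun h => hv ▸ apply_prefix_apply g h⟩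
  have hv' : ((g⁻¹ : TAut d) : Equiv.Perm (Vertex d)) v = v := by
    rw [InvMemClass.coe_inv, Equiv.Perm.inv_eq_iff_eq, hv]
  have := apply_prefix_apply g⁻¹ h
  rwa [hv', InvMemClass.coe_inv, ← Equiv.Perm.mul_apply, inv_mul_cancel,
    Equiv.Perm.one_apply] at this

lemma sect_mem_lst {D : ℕ} (g : TAut d) (u : Vertex d)
    (h : ∀ w : Vertex d, w.length ≤ D → (g : Equiv.Perm (Vertex d)) (u ++ w) = u ++ w) :
    sect g u ∈ lst d D := fun w hw => by
  rw [sect_apply, h w hw, List.drop_left]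

def restrictSubtree (g : TAut d) (v : Vertex d) (hv : (g : Equiv.Perm (Vertex d)) v = v) :
    TAut d :=
  ⟨Equiv.Perm.ofSubtype ((g : Equiv.Perm (Vertex d)).subtypePerm fun _ => prefix_apply_iff hv), by
    refine ⟨fun u => ?_, fun u w => ?_⟩
    · by_cases hvu : v <+: u
      · rw [Equiv.Perm.ofSubtype_subtypePerm_of_mem _ hvu, length_apply]
      · rw [Equiv.Perm.ofSubtype_subtypePerm_of_not_mem _ hvu]
    · by_cases hvu : v <+: u
      · rw [Equiv.Perm.ofSubtype_subtypePerm_of_mem _ hvu,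
          Equiv.Perm.ofSubtype_subtypePerm_of_mem _ (hvu.trans (List.prefix_append u w)),
          take_apply]
      rw [Equiv.Perm.ofSubtype_subtypePerm_of_not_mem _ hvu]
      by_cases hvuw : v <+: u ++ w
      · have huv : u <+: v :=
          (List.prefix_or_prefix_of_prefix (List.prefix_append u w) hvuw).resolve_right hvu
        rw [Equiv.Perm.ofSubtype_subtypePerm_of_mem _ hvuw, take_apply,
          apply_eq_self_of_prefix hv huv]
      · rw [Equiv.Perm.ofSubtype_subtypePerm_of_not_mem _ hvuw, List.take_left]⟩

variable {g : TAut d} {v u : Vertex d} {hv : (g : Equiv.Perm (Vertex d)) v = v}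

lemma restrictSubtree_apply_of_prefix (hvu : v <+: u) :
    (restrictSubtree g v hv : Equiv.Perm (Vertex d)) u = (g : Equiv.Perm (Vertex d)) u :=
  Equiv.Perm.ofSubtype_subtypePerm_of_mem _ hvu

lemma restrictSubtree_apply_of_not_prefix (hvu : ¬ v <+: u) :
    (restrictSubtree g v hv : Equiv.Perm (Vertex d)) u = u :=
  Equiv.Perm.ofSubtype_subtypePerm_of_not_mem _ hvu

lemma restrictSubtree_mem_gft {D : ℕ} {P : Subgroup (FAut d D)} (hgP : g ∈ gft d D P)
    (hgSt : g ∈ lst d (v.length + D - 1)) : restrictSubtree g v hv ∈ gft d D P := by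
  intro u
  by_cases hvu : v <+: u
  · have hsect : sect (restrictSubtree g v hv) u = sect g u := by
      ext w
      rw [sect_apply, sect_apply,
        restrictSubtree_apply_of_prefix (hvu.trans (List.prefix_append u w))]
    exact hsect ▸ hgP u
  -- Above a strict prefix `u` of `v` the first `D` levels lie within level `|v| + D - 1`.
  have hsect : sect (restrictSubtree g v hv) u ∈ lst d D := by
    refine sect_mem_lst _ u fun w hw => ?_
    by_cases hvuw : v <+: u ++ w
    · have huv : u <+: v :=
        (List.prefix_or_prefix_of_prefix (List.prefix_append u w) hvuw).resolve_right hvu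
      have hlt : u.length < v.length :=
        lt_of_le_of_ne huv.length_le fun h => hvu (huv.eq_of_length h ▸ List.prefix_rfl)
      rw [restrictSubtree_apply_of_prefix hvuw, hgSt _ (by rw [List.length_append]; omega)]
    · exact restrictSubtree_apply_of_not_prefix hvuw
  rw [show proj d D _ = 1 from (QuotientGroup.eq_one_iff _).mpr hsect]
  exact one_mem P

lemma restrictSubtree_mem_rist {D : ℕ} {P : Subgroup (FAut d D)} (hgP : g ∈ gft d D P)
    (hgSt : g ∈ lst d (v.length + D - 1)) : restrictSubtree g v hv ∈ rist (gft d D P) v :=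
  ⟨restrictSubtree_mem_gft hgP hgSt, fun _ hvw => restrictSubtree_apply_of_not_prefix hvw⟩

end RigidRestriction

section RigidLevelStabilizer

variable {d : ℕ}

lemma rist_le_rigidLevelStab (G : Subgroup (TAut d)) {n : ℕ} {v : Vertex d}
    (hv : v.length = n) : rist G v ≤ rigidLevelStab G n :=
  le_iSup₂ (f := fun (v : Vertex d) (_ : v ∈ {v : Vertex d | v.length = n}) => rist G v) v hv

open Classical in
def IsRestrictionBelow (g : TAut d) (S : Set (Vertex d)) (k : TAut d) : Prop :=
  ∀ u : Vertex d, (k : Equiv.Perm (Vertex d)) u =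
    if ∃ v ∈ S, v <+: u then (g : Equiv.Perm (Vertex d)) u else u

lemma isRestrictionBelow_empty (g : TAut d) : IsRestrictionBelow g ∅ 1 := fun u => by
  simp

lemma IsRestrictionBelow.restrictSubtree_mul {g k : TAut d} {S : Set (Vertex d)} {v : Vertex d}
    (hk : IsRestrictionBelow g S k) (hv : (g : Equiv.Perm (Vertex d)) v = v)
    (hS : ∀ w ∈ S, w.length = v.length) (hvS : v ∉ S) :
    IsRestrictionBelow g (insert v S) (restrictSubtree g v hv * k) := by
  intro u
  rw [Subgroup.coe_mul, Equiv.Perm.mul_apply, hk u]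
  by_cases hvu : v <+: u
  · have hSu : ¬ ∃ w ∈ S, w <+: u := fun ⟨w, hw, hwu⟩ =>
      hvS ((List.prefix_of_prefix_length_le hwu hvu (hS w hw).le).eq_of_length (hS w hw) ▸ hw)
    rw [if_neg hSu, if_pos ⟨v, Set.mem_insert v S, hvu⟩, restrictSubtree_apply_of_prefix hvu]
  by_cases hSu : ∃ w ∈ S, w <+: u
  · obtain ⟨w, hw, hwu⟩ := hSu
    rw [if_pos ⟨w, hw, hwu⟩, if_pos ⟨w, Set.mem_insert_of_mem v hw, hwu⟩,
      restrictSubtree_apply_of_not_prefix ((prefix_apply_iff hv).not.mpr hvu)]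
  · have hSvu : ¬ ∃ w ∈ insert v S, w <+: u := fun ⟨w, hw, hwu⟩ =>
      (Set.mem_insert_iff.mp hw).elim (fun h => hvu (h ▸ hwu)) fun hw => hSu ⟨w, hw, hwu⟩
    rw [if_neg hSu, if_neg hSvu, restrictSubtree_apply_of_not_prefix hvu]

lemma IsRestrictionBelow.eq_of_level {g k : TAut d} {n : ℕ}
    (hk : IsRestrictionBelow g {v | v.length = n} k)
    (hg : ∀ u : Vertex d, u.length < n → (g : Equiv.Perm (Vertex d)) u = u) : k = g := by
  ext u : 2
  rw [hk u]
  by_cases hu : n ≤ u.length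
  · exact if_pos ⟨u.take n, by simpa using hu, List.take_prefix n u⟩
  · have hSu : ¬ ∃ v ∈ {v : Vertex d | v.length = n}, v <+: u := fun ⟨v, hv, hvu⟩ =>
      hu (hv ▸ hvu.length_le)
    rw [if_neg hSu, hg u (by omega)]

theorem inf_lst_le_rigidLevelStab {D : ℕ} (hD : 1 ≤ D) (n : ℕ) (P : Subgroup (FAut d D)) :
    gft d D P ⊓ lst d (n + D - 1) ≤ rigidLevelStab (gft d D P) n := by
  rintro g ⟨hgP, hgSt⟩
  have hfix : ∀ v : Vertex d, v.length = n → (g : Equiv.Perm (Vertex d)) v = v :=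
    fun v hv => hgSt v (by omega)
  obtain ⟨k, hk, hkg⟩ :
      ∃ k ∈ rigidLevelStab (gft d D P) n, IsRestrictionBelow g {v | v.length = n} k := by
    refine Set.Finite.induction_on_subset _ (List.finite_length_eq (Fin d) n)
      ⟨1, one_mem _, isRestrictionBelow_empty g⟩ ?_
    rintro v S hv hS hvS ⟨k, hk, hkS⟩
    refine ⟨restrictSubtree g v (hfix v hv) * k, mul_mem ?_ hk,
      hkS.restrictSubtree_mul _ (fun w hw => (hS hw).trans hv.symm) hvS⟩
    exact rist_le_rigidLevelStab _ hv (restrictSubtree_mem_rist hgP (hv ▸ hgSt))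
  rwa [← hkg.eq_of_level fun u hu => hgSt u (by omega)]

lemma finite_of_inf_lst_eq_bot {H : Subgroup (TAut d)} {m : ℕ} (h : H ⊓ lst d m = ⊥) :
    Finite H := by
  let Ball := {v : Vertex d // v.length ≤ m}
  have : Finite Ball := (List.finite_length_le (Fin d) m).to_subtype
  refine Finite.of_injective (fun (g : H) (v : Ball) =>
    (⟨(g : Equiv.Perm (Vertex d)) v, (length_apply _ _).trans_le v.2⟩ : Ball)) fun a b hab => ?_
  have hba : (b : TAut d)⁻¹ * a ∈ H ⊓ lst d m := by
    refine Subgroup.mem_inf.mpr ⟨mul_mem (inv_mem b.2) a.2, fun v hv => ?_⟩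
    rw [Subgroup.coe_mul, Equiv.Perm.mul_apply, Subgroup.coe_inv, Equiv.Perm.inv_eq_iff_eq]
    exact congrArg Subtype.val (congrFun hab ⟨v, hv⟩)
  rw [h, Subgroup.mem_bot, inv_mul_eq_one] at hba
  exact Subtype.ext hba.symm

end RigidLevelStabilizer

theorem statement_15_general (d D : ℕ) (hD : 1 ≤ D) (P : Subgroup (FAut d D)) :
    (∀ n : ℕ, 1 ≤ n →
      gft d D P ⊓ lst d (n + D - 1) ≤ rigidLevelStab (gft d D P) n) ∧
    (Infinite ↥(gft d D P) → ∀ n : ℕ, 1 ≤ n → rigidLevelStab (gft d D P) n ≠ ⊥) := by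
  refine ⟨fun n _ => inf_lst_le_rigidLevelStab hD n P, fun _ n _ hbot => ?_⟩
  have : Finite (gft d D P) :=
    finite_of_inf_lst_eq_bot (eq_bot_iff.mpr (hbot ▸ inf_lst_le_rigidLevelStab hD n P))
  exact not_finite (gft d D P)

/-- If `P ≤ Aut(T^D)` is a minimal pattern subgroup with group of finite
type `G = G_P`, then `St_G(n + D − 1) ≤ RiSt_G(n)` for all `n ≥ 1`; in particular, if `G` is
infinite then `RiSt_G(n) ≠ 1` for all `n ≥ 1`, i.e. `G` is weakly branch. -/
theorem statement_15 (d D : ℕ) (hD : 1 ≤ D) (P : Subgroup (FAut d D))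
    (hmin : IsMinimalPattern d D P) :
    (∀ n : ℕ, 1 ≤ n →
      gft d D P ⊓ lst d (n + D - 1) ≤ rigidLevelStab (gft d D P) n) ∧
    (Infinite ↥(gft d D P) → ∀ n : ℕ, 1 ≤ n → rigidLevelStab (gft d D P) n ≠ ⊥) :=
  statement_15_general d D hD P

end TreeFT
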